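/- Let X and Y be metric spaces and f a multifunction from X to Y whose domain dom f is a compact subset of X. If f is nonuniformly weakly continuous, then f is uniformly weakly continuous. -/
import Mathlib


/-- If a multifunction between metric spaces has compact domain and is nonuniformly
weakly continuous, then it is uniformly weakly continuous. -/
theorem nonuniformWeak_implies_uniformWeak {X Y : Type*} [MetricSpace X] [MetricSpace Y]
    (f : X → Set Y) (hdom : IsCompact {x : X | (f x).Nonempty})
    (hnwc : ∀ ε > (0:ℝ), ∀ x, (f x).Nonempty → ∃ δ > (0:ℝ), ∃ y ∈ f x,
      ∀ x', (f x').Nonempty → dist x x' < δ → ∃ y' ∈ f x', dist y y' < ε) :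
    ∀ ε > (0:ℝ), ∃ δ > (0:ℝ), ∀ x, (f x).Nonempty → ∃ y ∈ f x,
      ∀ x', (f x').Nonempty → dist x x' < δ → ∃ y' ∈ f x', dist y y' < ε := by
  intro ε hε
  have h2 : (0:ℝ) < ε / 2 := by linarith
  have key := fun x hx => hnwc (ε / 2) h2 x hx
  choose δ hδpos y hyf H using key
  obtain ⟨t, ht⟩ := hdom.elim_nhds_subcover' (fun x hx => Metric.ball x (δ x hx / 2))
    (fun x hx => Metric.ball_mem_nhds _ (by linarith [hδpos x hx]))
  by_cases hne : t.Nonempty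
  · obtain ⟨z0, hz0mem, hz0min⟩ := t.exists_min_image (fun z => δ z.1 z.2 / 2) hne
    refine ⟨δ z0.1 z0.2 / 2, by linarith [hδpos z0.1 z0.2], fun x hx => ?_⟩
    have hxcov := ht hx
    simp only [Set.mem_iUnion, Metric.mem_ball] at hxcov
    obtain ⟨z, hzt, hxz⟩ := hxcov
    -- x is within δ z / 2 of z, so there is yx ∈ f x close to y z
    have hzx : dist z.1 x < δ z.1 z.2 := by
      rw [dist_comm]; linarith [hδpos z.1 z.2]
    obtain ⟨yx, hyx, hyxd⟩ := H z.1 z.2 x hx hzx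
    refine ⟨yx, hyx, fun x' hx' hxx' => ?_⟩
    have hδ0 : δ z0.1 z0.2 / 2 ≤ δ z.1 z.2 / 2 := hz0min z hzt
    have hzx' : dist z.1 x' < δ z.1 z.2 := by
      calc dist z.1 x' ≤ dist z.1 x + dist x x' := dist_triangle _ _ _
        _ < δ z.1 z.2 / 2 + δ z0.1 z0.2 / 2 := by
            rw [dist_comm z.1 x]; linarith
        _ ≤ δ z.1 z.2 := by linarith
    obtain ⟨y', hy', hy'd⟩ := H z.1 z.2 x' hx' hzx'
    refine ⟨y', hy', ?_⟩
    calc dist yx y' ≤ dist yx (y z.1 z.2) + dist (y z.1 z.2) y' := dist_triangle _ _ _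
      _ < ε := by rw [dist_comm yx]; linarith
  · refine ⟨1, one_pos, fun x hx => ?_⟩
    exfalso
    have := ht hx
    simp only [Finset.not_nonempty_iff_eq_empty.mp hne] at this
    simp at this
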